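/- arXiv:1409.7851 — 2 statements merged into one kernel-verified Lean document; each statement's English description precedes it below -/
import Mathlib

section
/- Weak quasitriangle inequality for relative excess: if A, B, C ⊆ ℝⁿ with B, C nonempty and x ∈ closure(B), then d^{x,r}(A,C) ≤ d^{x,r}(A,B) + 2 d^{x,2r}(closure(B), C) for all r > 0. -/
open Metric Set Filter Topology Pointwise

noncomputable section

/-- Excess of `A` over `B`: `sup_{a ∈ A} inf_{b ∈ B} |a - b|` (extended-real valued). -/
def ex {n : ℕ} (A B : Set (EuclideanSpace ℝ (Fin n))) : ENNReal :=
  ⨆ a ∈ A, EMetric.infEdist a B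

/-- Relative excess of `A` in the closed ball `B(x,r)` over `B`. -/
def relEx {n : ℕ} (x : EuclideanSpace ℝ (Fin n)) (r : ℝ)
    (A B : Set (EuclideanSpace ℝ (Fin n))) : ℝ :=
  (ex (A ∩ closedBall x r) B).toReal / r

/-- Relative Walkup–Wets distance in `B(x,r)`. -/
def WW {n : ℕ} (x : EuclideanSpace ℝ (Fin n)) (r : ℝ)
    (A B : Set (EuclideanSpace ℝ (Fin n))) : ℝ :=
  max (relEx x r A B) (relEx x r B A)

/- The nearest point `b ∈ closure B` to a point `a ∈ B(x, r)` is no farther from `a` than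
`x ∈ closure B` is, hence lies in `B(x, 2r)`; the triangle inequality through `b` then bounds
`dist(a, C)` by `dist(a, B) + dist(b, C)`, and taking suprema and dividing by `r` gives the
claim. -/

section NearestPoint

variable {α : Type*} [PseudoMetricSpace α]

theorem exists_mem_closure_infEDist_eq_edist [ProperSpace α] {s : Set α} (hs : s.Nonempty)
    (a : α) : ∃ b ∈ closure s, infEDist a s = edist a b := by
  obtain ⟨b, hb, hab⟩ := exists_mem_closure_infDist_eq_dist hs a
  refine ⟨b, hb, ?_⟩
  rw [edist_dist, ← hab, infDist, ENNReal.ofReal_toReal (infEDist_ne_top hs)]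

theorem exists_mem_closure_inter_closedBall_infEDist_le_add [ProperSpace α] {B : Set α}
    (C : Set α) {x a : α} {r : ℝ} (hx : x ∈ closure B) (ha : dist a x ≤ r) :
    ∃ b ∈ closure B ∩ closedBall x (2 * r),
      infEDist a C ≤ infEDist a B + infEDist b C := by
  obtain ⟨b, hbB, hab⟩ :=
    exists_mem_closure_infEDist_eq_edist (closure_nonempty_iff.mp ⟨x, hx⟩) a
  have hab_le : dist a b ≤ dist a x := by
    have h : edist a b ≤ edist a x := by
      rw [← hab, ← infEDist_closure]
      exact infEDist_le_edist_of_mem hx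
    rwa [edist_dist, edist_dist, ENNReal.ofReal_le_ofReal_iff dist_nonneg] at h
  refine ⟨b, ⟨hbB, ?_⟩, ?_⟩
  · rw [mem_closedBall]
    linarith [dist_triangle b a x, dist_comm a b]
  · rw [hab]
    exact infEDist_le_edist_add_infEDist

end NearestPoint

section Excess

variable {n : ℕ}

theorem infEDist_le_ex {A : Set (EuclideanSpace ℝ (Fin n))} (B : Set (EuclideanSpace ℝ (Fin n)))
    {a : EuclideanSpace ℝ (Fin n)} (ha : a ∈ A) : infEDist a B ≤ ex A B :=
  le_iSup₂ (f := fun a _ => infEDist a B) a ha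

theorem ex_ne_top_of_isBounded {A B : Set (EuclideanSpace ℝ (Fin n))} (hA : Bornology.IsBounded A)
    (hB : B.Nonempty) : ex A B ≠ ⊤ := by
  obtain ⟨b, hb⟩ := hB
  obtain ⟨R, hR⟩ := hA.subset_closedBall b
  refine ne_top_of_le_ne_top (ENNReal.ofReal_ne_top (r := R)) (iSup₂_le fun a ha => ?_)
  calc infEDist a B ≤ edist a b := infEDist_le_edist_of_mem hb
    _ = ENNReal.ofReal (dist a b) := edist_dist a b
    _ ≤ ENNReal.ofReal R := ENNReal.ofReal_le_ofReal (hR ha)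

theorem ex_inter_closedBall_le_add {A B C : Set (EuclideanSpace ℝ (Fin n))}
    {x : EuclideanSpace ℝ (Fin n)} (r : ℝ) (hx : x ∈ closure B) :
    ex (A ∩ closedBall x r) C ≤
      ex (A ∩ closedBall x r) B + ex (closure B ∩ closedBall x (2 * r)) C := by
  refine iSup₂_le fun a ha => ?_
  obtain ⟨b, hb, hab⟩ := exists_mem_closure_inter_closedBall_infEDist_le_add C hx ha.2
  exact hab.trans (add_le_add (infEDist_le_ex B ha) (infEDist_le_ex C hb))

end Excess

theorem relEx_weak_quasitriangle_general {n : ℕ} (A B C : Set (EuclideanSpace ℝ (Fin n)))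
    (hC : C.Nonempty) (x : EuclideanSpace ℝ (Fin n))
    (hx : x ∈ closure B) (r : ℝ) (hr : 0 < r) :
    relEx x r A C ≤ relEx x r A B + 2 * relEx x (2 * r) (closure B) C := by
  have hB_fin : ex (A ∩ closedBall x r) B ≠ ⊤ :=
    ex_ne_top_of_isBounded (isBounded_closedBall.subset inter_subset_right)
      (closure_nonempty_iff.mp ⟨x, hx⟩)
  have hC_fin : ex (closure B ∩ closedBall x (2 * r)) C ≠ ⊤ :=
    ex_ne_top_of_isBounded (isBounded_closedBall.subset inter_subset_right) hC
  have hsum := ENNReal.toReal_le_add (ex_inter_closedBall_le_add r hx) hB_fin hC_fin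
  have htwo : 2 * relEx x (2 * r) (closure B) C =
      (ex (closure B ∩ closedBall x (2 * r)) C).toReal / r := by
    unfold relEx
    field_simp
  rw [htwo, relEx, relEx, ← add_div]
  gcongr

/-- Weak quasitriangle inequality for the relative excess. -/
theorem relEx_weak_quasitriangle {n : ℕ} (A B C : Set (EuclideanSpace ℝ (Fin n)))
    (hB : B.Nonempty) (hC : C.Nonempty) (x : EuclideanSpace ℝ (Fin n))
    (hx : x ∈ closure B) (r : ℝ) (hr : 0 < r) :
    relEx x r A C ≤ relEx x r A B + 2 * relEx x (2 * r) (closure B) C :=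
  relEx_weak_quasitriangle_general A B C hC x hx r hr
end
end

section
/- If B is a pseudotangent set of a closed set A at x ∈ A and y ∈ B, then B − y is also a pseudotangent set of A at x. -/
open Metric Set Filter Topology Pointwise

noncomputable section

/-- Attouch–Wets convergence of a sequence of sets to `L` (all sets containing `0`). -/
def AWT {n : ℕ} (F : ℕ → Set (EuclideanSpace ℝ (Fin n)))
    (L : Set (EuclideanSpace ℝ (Fin n))) : Prop :=
  ∀ r : ℝ, 0 < r → Filter.Tendsto (fun i => WW (0 : EuclideanSpace ℝ (Fin n)) r (F i) L)
    Filter.atTop (nhds 0)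

/-- The blow-up `(A - x)/t` of a set `A` at `x` with scale `t`. -/
def blowup {n : ℕ} (A : Set (EuclideanSpace ℝ (Fin n))) (x : EuclideanSpace ℝ (Fin n))
    (t : ℝ) : Set (EuclideanSpace ℝ (Fin n)) :=
  (fun a => t⁻¹ • (a - x)) '' A

/-- `T` is a pseudotangent set of `A` at `x` directed along `D`. -/
def IsPseudoTangentAlong {n : ℕ} (A : Set (EuclideanSpace ℝ (Fin n)))
    (x : EuclideanSpace ℝ (Fin n)) (D : Set (EuclideanSpace ℝ (Fin n)))
    (T : Set (EuclideanSpace ℝ (Fin n))) : Prop :=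
  IsClosed T ∧ (0 : EuclideanSpace ℝ (Fin n)) ∈ T ∧
    ∃ (xs : ℕ → EuclideanSpace ℝ (Fin n)) (rs : ℕ → ℝ),
      (∀ i, xs i ∈ A) ∧ (∀ i, 0 < rs i) ∧
      Filter.Tendsto xs Filter.atTop (nhds x) ∧
      Filter.Tendsto rs Filter.atTop (nhds 0) ∧
      (∀ i, (rs i)⁻¹ • (xs i - x) ∈ D) ∧
      AWT (fun i => blowup A (xs i) (rs i)) T

/-- `T` is a pseudotangent set of `A` at `x`. -/
def IsPseudoTangent {n : ℕ} (A : Set (EuclideanSpace ℝ (Fin n)))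
    (x : EuclideanSpace ℝ (Fin n)) (T : Set (EuclideanSpace ℝ (Fin n))) : Prop :=
  IsPseudoTangentAlong A x Set.univ T

/-- `T` is a tangent set of `A` at `x`. -/
def IsTangent {n : ℕ} (A : Set (EuclideanSpace ℝ (Fin n)))
    (x : EuclideanSpace ℝ (Fin n)) (T : Set (EuclideanSpace ℝ (Fin n))) : Prop :=
  IsClosed T ∧ (0 : EuclideanSpace ℝ (Fin n)) ∈ T ∧
    ∃ rs : ℕ → ℝ, (∀ i, 0 < rs i) ∧ Filter.Tendsto rs Filter.atTop (nhds 0) ∧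
      AWT (fun i => blowup A x (rs i)) T

/-!
Let `C i` be the blow-ups of `A` at `xs i ∈ A`, scale `rs i`, converging to `B`. Since `y ∈ B`,
Attouch–Wets convergence provides points `v i ∈ C i` with `v i → y`; they are the rescalings of
points `a i = xs i + rs i • v i ∈ A`, which still tend to `x`. The blow-up of `A` at `a i` with
scale `rs i` is the translate `C i - v i`, and translating by a convergent sequence of vectors
preserves Attouch–Wets convergence, so these blow-ups converge to `B - y`.
-/

section

variable {α : Type*} [PseudoMetricSpace α]

lemma exists_tendsto_of_tendsto_infDist {C : ℕ → Set α} {y : α} (hne : ∀ i, (C i).Nonempty)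
    (h : Tendsto (fun i => infDist y (C i)) atTop (𝓝 0)) :
    ∃ v : ℕ → α, (∀ i, v i ∈ C i) ∧ Tendsto v atTop (𝓝 y) := by
  have hnear : ∀ i : ℕ, ∃ w ∈ C i, dist y w < infDist y (C i) + 1 / (i + 1) := fun i =>
    (infDist_lt_iff (hne i)).1 (lt_add_of_pos_right _ Nat.one_div_pos_of_nat)
  choose v hvC hv using hnear
  refine ⟨v, hvC, tendsto_iff_dist_tendsto_zero.2 <| squeeze_zero (fun _ => dist_nonneg)
    (fun i => (dist_comm (v i) y).trans_le (hv i).le) ?_⟩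
  simpa using h.add tendsto_one_div_add_atTop_nhds_zero_nat

end

variable {n : ℕ} {A B C S T : Set (EuclideanSpace ℝ (Fin n))} {x y : EuclideanSpace ℝ (Fin n)}
  {r R : ℝ}

lemma ex_mono_left (h : A ⊆ C) : ex A B ≤ ex C B :=
  biSup_mono h

lemma infEDist_le_ex_s10 (hx : x ∈ A) : infEDist x B ≤ ex A B :=
  le_iSup₂_of_le x hx le_rfl

lemma ex_inter_closedBall_le (hx : x ∈ B) : ex (A ∩ closedBall x r) B ≤ ENNReal.ofReal r := by
  refine iSup₂_le fun a ha => (infEDist_le_edist_of_mem hx).trans ?_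
  rw [edist_dist]
  exact ENNReal.ofReal_le_ofReal (mem_closedBall.1 ha.2)

lemma ex_inter_closedBall_ne_top (hx : x ∈ B) : ex (A ∩ closedBall x r) B ≠ ⊤ :=
  ((ex_inter_closedBall_le hx).trans_lt ENNReal.ofReal_lt_top).ne

lemma toReal_ex_inter_closedBall (hr : r ≠ 0) :
    (ex (A ∩ closedBall x r) B).toReal = relEx x r A B * r := by
  rw [relEx, div_mul_cancel₀ _ hr]

lemma relEx_nonneg (hr : 0 ≤ r) : 0 ≤ relEx x r A B :=
  div_nonneg ENNReal.toReal_nonneg hr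

lemma WW_nonneg (hr : 0 ≤ r) : 0 ≤ WW x r A B :=
  le_max_of_le_left (relEx_nonneg hr)

lemma ex_image_sub_inter_closedBall_le (v w : EuclideanSpace ℝ (Fin n)) :
    ex ((· - v) '' S ∩ closedBall 0 r) ((· - w) '' T)
      ≤ ex (S ∩ closedBall 0 (r + ‖v‖)) T + edist v w := by
  refine iSup₂_le ?_
  rintro _ ⟨⟨a, ha, rfl⟩, hav⟩
  have haR : a ∈ S ∩ closedBall 0 (r + ‖v‖) := by
    refine ⟨ha, mem_closedBall_zero_iff.2 ?_⟩
    have := norm_le_norm_sub_add a v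
    linarith [mem_closedBall_zero_iff.1 hav]
  calc infEDist (a - v) ((· - w) '' T)
      ≤ infEDist (a - w) ((· - w) '' T) + edist (a - v) (a - w) :=
        infEDist_le_infEDist_add_edist
    _ = infEDist a T + edist v w :=
        congrArg₂ (· + ·) (infEDist_image (IsometryEquiv.subRight w).isometry)
          (edist_sub_left a v w)
    _ ≤ ex (S ∩ closedBall 0 (r + ‖v‖)) T + edist v w := by gcongr; exact infEDist_le_ex_s10 haR

lemma relEx_image_sub_le (v w : EuclideanSpace ℝ (Fin n)) (hr : 0 < r)
    (hT : (0 : EuclideanSpace ℝ (Fin n)) ∈ T) (hR : r + ‖v‖ ≤ R) :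
    relEx 0 r ((· - v) '' S) ((· - w) '' T) ≤ (relEx 0 R S T * R + dist v w) / r := by
  have hfin := ex_inter_closedBall_ne_top (A := S) (r := R) hT
  have hle : ex ((· - v) '' S ∩ closedBall 0 r) ((· - w) '' T)
      ≤ ex (S ∩ closedBall 0 R) T + edist v w :=
    (ex_image_sub_inter_closedBall_le v w).trans <| by
      gcongr; exact ex_mono_left (inter_subset_inter_right S (closedBall_subset_closedBall hR))
  rw [relEx, ← toReal_ex_inter_closedBall (lt_of_lt_of_le (by positivity) hR).ne', dist_edist,
    ← ENNReal.toReal_add hfin (edist_ne_top v w)]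
  gcongr
  exact ENNReal.add_ne_top.2 ⟨hfin, edist_ne_top v w⟩

lemma WW_image_sub_le (v w : EuclideanSpace ℝ (Fin n)) (hr : 0 < r)
    (hC : (0 : EuclideanSpace ℝ (Fin n)) ∈ C) (hB : (0 : EuclideanSpace ℝ (Fin n)) ∈ B)
    (hvR : r + ‖v‖ ≤ R) (hwR : r + ‖w‖ ≤ R) :
    WW 0 r ((· - v) '' C) ((· - w) '' B) ≤ (WW 0 R C B * R + dist v w) / r := by
  have hR : 0 ≤ R := le_trans (by positivity) hvR
  refine max_le ((relEx_image_sub_le v w hr hB hvR).trans ?_)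
    ((relEx_image_sub_le w v hr hC hwR).trans ?_)
  · gcongr; exact le_max_left _ _
  · rw [dist_comm]; gcongr; exact le_max_right _ _

lemma AWT.image_sub {F : ℕ → Set (EuclideanSpace ℝ (Fin n))} {v : ℕ → EuclideanSpace ℝ (Fin n)}
    (hF : AWT F B) (hF0 : ∀ i, (0 : EuclideanSpace ℝ (Fin n)) ∈ F i)
    (hB0 : (0 : EuclideanSpace ℝ (Fin n)) ∈ B) (hv : Tendsto v atTop (𝓝 y)) :
    AWT (fun i => (· - v i) '' F i) ((· - y) '' B) := by
  intro r hr
  set R := r + (‖y‖ + 1)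
  have hbound : ∀ᶠ i in atTop,
      WW 0 r ((· - v i) '' F i) ((· - y) '' B) ≤ (WW 0 R (F i) B * R + dist (v i) y) / r := by
    filter_upwards [hv.norm.eventually (gt_mem_nhds (lt_add_one ‖y‖))] with i hi
    exact WW_image_sub_le (v i) y hr (hF0 i) hB0 (by linarith) (by linarith)
  refine squeeze_zero' (.of_forall fun i => WW_nonneg hr.le) hbound ?_
  simpa using (((hF R (by positivity)).mul_const R).add
    (tendsto_iff_dist_tendsto_zero.1 hv)).div_const r

lemma AWT.tendsto_infDist {F : ℕ → Set (EuclideanSpace ℝ (Fin n))} (hF : AWT F B)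
    (hF0 : ∀ i, (0 : EuclideanSpace ℝ (Fin n)) ∈ F i) (hy : y ∈ B) :
    Tendsto (fun i => infDist y (F i)) atTop (𝓝 0) := by
  set r := ‖y‖ + 1
  have hyr : y ∈ B ∩ closedBall 0 r := ⟨hy, mem_closedBall_zero_iff.2 (by linarith)⟩
  refine squeeze_zero (fun _ => infDist_nonneg) (g := fun i => WW 0 r (F i) B * r)
    (fun i => ?_) (by simpa using (hF r (by positivity)).mul_const r)
  calc infDist y (F i) ≤ (ex (B ∩ closedBall 0 r) (F i)).toReal :=
        ENNReal.toReal_mono (ex_inter_closedBall_ne_top (hF0 i)) (infEDist_le_ex_s10 hyr)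
    _ = relEx 0 r B (F i) * r := toReal_ex_inter_closedBall (by positivity)
    _ ≤ WW 0 r (F i) B * r := by gcongr; exact le_max_right _ _

lemma AWT.exists_tendsto_of_mem {F : ℕ → Set (EuclideanSpace ℝ (Fin n))} (hF : AWT F B)
    (hF0 : ∀ i, (0 : EuclideanSpace ℝ (Fin n)) ∈ F i) (hy : y ∈ B) :
    ∃ v : ℕ → EuclideanSpace ℝ (Fin n), (∀ i, v i ∈ F i) ∧ Tendsto v atTop (𝓝 y) :=
  exists_tendsto_of_tendsto_infDist (fun i => ⟨0, hF0 i⟩) (hF.tendsto_infDist hF0 hy)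

lemma zero_mem_blowup (hx : x ∈ A) (t : ℝ) : (0 : EuclideanSpace ℝ (Fin n)) ∈ blowup A x t :=
  ⟨x, hx, by simp⟩

lemma blowup_eq_image_sub (A : Set (EuclideanSpace ℝ (Fin n))) (x a : EuclideanSpace ℝ (Fin n))
    (t : ℝ) : blowup A a t = (· - t⁻¹ • (a - x)) '' blowup A x t := by
  rw [blowup, blowup, image_image]
  refine image_congr' fun b => ?_
  rw [← smul_sub, sub_sub_sub_cancel_right]

theorem isPseudoTangent_translate_general {n : ℕ} (A : Set (EuclideanSpace ℝ (Fin n)))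
    (x : EuclideanSpace ℝ (Fin n))
    (B : Set (EuclideanSpace ℝ (Fin n))) (hB : IsPseudoTangent A x B)
    (y : EuclideanSpace ℝ (Fin n)) (hy : y ∈ B) :
    IsPseudoTangent A x ((fun b => b - y) '' B) := by
  obtain ⟨hBc, hB0, xs, rs, hxsA, hrs, hxsx, hrs0, -, hAW⟩ := hB
  have hC0 i := zero_mem_blowup (hxsA i) (rs i)
  obtain ⟨v, hvC, hvy⟩ := hAW.exists_tendsto_of_mem hC0 hy
  choose a haA hav using hvC
  have ha : a = fun i => xs i + rs i • v i := funext fun i => by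
    rw [← hav i, smul_inv_smul₀ (hrs i).ne', add_sub_cancel]
  have hax : Tendsto a atTop (𝓝 x) := by
    simpa [ha] using hxsx.add (hrs0.smul hvy)
  have hblowup i : blowup A (a i) (rs i) = (· - v i) '' blowup A (xs i) (rs i) := by
    rw [blowup_eq_image_sub A (xs i), ← hav i]
  refine ⟨(Homeomorph.subRight y).isClosedMap B hBc, ⟨y, hy, sub_self y⟩, a, rs, haA, hrs, hax,
    hrs0, fun _ => mem_univ _, ?_⟩
  simpa only [hblowup] using hAW.image_sub hC0 hB0 hvy

/-- Pseudotangent sets are invariant under translation by their own points. -/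
theorem isPseudoTangent_translate {n : ℕ} (A : Set (EuclideanSpace ℝ (Fin n)))
    (hAc : IsClosed A) (x : EuclideanSpace ℝ (Fin n)) (hx : x ∈ A)
    (B : Set (EuclideanSpace ℝ (Fin n))) (hB : IsPseudoTangent A x B)
    (y : EuclideanSpace ℝ (Fin n)) (hy : y ∈ B) :
    IsPseudoTangent A x ((fun b => b - y) '' B) :=
  isPseudoTangent_translate_general A x B hB y hy
end
end
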